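/- For every complex number q with |q| < 1, the series h(q) = ∑_{n≥1} (-1)^{n+1} q^{n(n+1)/2} / (1 - q^n) equals ∑_{j≥1} q^{j^2} (1 + 2q^j + 2q^{2j} + ⋯ + 2q^{j^2-j} + q^{j^2}). -/

import Mathlib

/-!
Expanding `1 / (1 - q ^ n)` geometrically turns both sides into sums of `q ^ (a * b)` over sets
of pairs of positive integers. On the left, the terms with `n` even contribute the pairs `(d, e)`
with `d` odd and `d < 2 e`, and the terms with `n` odd contribute, with sign `-1`, the pairs with
`d` odd and `2 e < d`. Write `e = 2 ^ s * t` with `t` odd. Exchanging `d` and `t` preserves the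
product and matches the negative pairs with the positive pairs having `2 ^ (s + 1) * d < t`, so
these cancel. The remaining positive pairs are in bijection, via
`(2 ^ a * d, 2 ^ b * t) ↦ (d, 2 ^ (a + b) * t)`, with the pairs `(u, v)` with `u < 2 v` and
`v ≤ 2 u`. The right-hand side lists exactly these: the ones with `u ≤ v` directly, and the ones
with `v < u` after exchanging `u` and `v`.
-/

open Finset Function

namespace HSeriesIdentity

lemma factorization_two_pow_mul_odd (a : ℕ) {b : ℕ} (hb : Odd b) :
    (2 ^ a * b).factorization 2 = a := by
  rw [Nat.factorization_mul (by positivity) hb.pos.ne', Finsupp.add_apply,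
    Nat.Prime.factorization_pow Nat.prime_two, Finsupp.single_eq_same,
    Nat.factorization_eq_zero_of_not_dvd hb.not_two_dvd_nat, add_zero]

lemma ordCompl_two_pow_mul_odd (a : ℕ) {b : ℕ} (hb : Odd b) : ordCompl[2] (2 ^ a * b) = b := by
  rw [factorization_two_pow_mul_odd a hb, Nat.mul_div_cancel_left b (by positivity)]

lemma two_pow_mul_odd_inj {a a' b b' : ℕ} (hb : Odd b) (hb' : Odd b')
    (h : 2 ^ a * b = 2 ^ a' * b') : a = a' ∧ b = b' := by
  constructor
  · rw [← factorization_two_pow_mul_odd a hb, h, factorization_two_pow_mul_odd a' hb']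
  · rw [← ordCompl_two_pow_mul_odd a hb, h, ordCompl_two_pow_mul_odd a' hb']

def balanced : Set (ℕ × ℕ) := {p | p.1 < 2 * p.2 ∧ p.2 ≤ 2 * p.1}

lemma ne_zero_of_mem_balanced {p : ℕ × ℕ} (hp : p ∈ balanced) : p.1 ≠ 0 ∧ p.2 ≠ 0 := by
  obtain ⟨h₁, h₂⟩ := hp
  omega

lemma exists_two_pow_mul_mem_balanced (d t : ℕ) :
    ∀ s, d < 2 ^ (s + 1) * t → t ≤ 2 ^ (s + 1) * d →
      ∃ a b, a + b = s ∧ (2 ^ a * d, 2 ^ b * t) ∈ balanced := by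
  intro s
  induction s using Nat.twoStepInduction with
  | zero => intro h₁ h₂; exact ⟨0, 0, by simp_all [balanced]⟩
  | one =>
    intro h₁ h₂
    rcases lt_or_ge d t with h | h
    · exact ⟨1, 0, rfl, by simp only [balanced, Set.mem_ofPred_eq, pow_zero, pow_one]; omega⟩
    · exact ⟨0, 1, rfl, by simp only [balanced, Set.mem_ofPred_eq, pow_zero, pow_one]; omega⟩
  | more n ih _ =>
    -- either level `n` already balances `d` and `t`, or all the powers of 2 go to the smaller one
    intro h₁ h₂
    simp only [balanced, Set.mem_ofPred_eq] at ih ⊢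
    by_cases hd : 2 ^ (n + 1) * t ≤ d
    · refine ⟨0, n + 2, by omega, ?_, ?_⟩ <;> simp only [pow_succ] at h₁ hd ⊢ <;> linarith
    by_cases ht : 2 ^ (n + 1) * d < t
    · refine ⟨n + 2, 0, by omega, ?_, ?_⟩ <;> simp only [pow_succ] at h₂ ht ⊢ <;> linarith
    obtain ⟨a, b, rfl, ha, hb⟩ := ih (by omega) (by omega)
    refine ⟨a + 1, b + 1, by omega, ?_, ?_⟩ <;> rw [pow_succ, pow_succ] <;> linarith

lemma add_lt_add_add_two_of_lt_of_le {a b a' b' d t : ℕ} (hd : 0 < d)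
    (h : 2 ^ a * d < 2 * (2 ^ b * t)) (h' : 2 ^ b' * t ≤ 2 * (2 ^ a' * d)) :
    a + b' < a' + b + 2 := by
  have key : 2 ^ (a + b') * (d * t) < 2 ^ (a' + b + 2) * (d * t) :=
    calc 2 ^ (a + b') * (d * t) = 2 ^ a * d * (2 ^ b' * t) := by ring
      _ < 2 * (2 ^ b * t) * (2 * (2 ^ a' * d)) :=
        Nat.mul_lt_mul_of_lt_of_le h h' (by positivity)
      _ = 2 ^ (a' + b + 2) * (d * t) := by ring
  exact (Nat.pow_lt_pow_iff_right (by norm_num)).1 (Nat.lt_of_mul_lt_mul_right key)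

lemma eq_of_two_pow_mul_mem_balanced {a b a' b' d t : ℕ} (hd : 0 < d)
    (h : (2 ^ a * d, 2 ^ b * t) ∈ balanced) (h' : (2 ^ a' * d, 2 ^ b' * t) ∈ balanced)
    (hs : a + b = a' + b') : a = a' := by
  have := add_lt_add_add_two_of_lt_of_le hd h.1 h'.2
  have := add_lt_add_add_two_of_lt_of_le hd h'.1 h.2
  omega

noncomputable def mulPowSum (q : ℂ) (A : Set (ℕ × ℕ)) : ℂ := ∑' p : A, q ^ (p.1.1 * p.1.2)

section

variable {q : ℂ}

lemma summable_mulPow (hq : ‖q‖ < 1) {A : Set (ℕ × ℕ)} (hA : A ⊆ Set.Ioi 0 ×ˢ Set.Ioi 0) :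
    Summable (fun p : A => q ^ (p.1.1 * p.1.2)) := by
  have hgeom : Summable (fun n : ℕ => ‖q‖ ^ (n - 1)) := by
    rw [← summable_nat_add_iff 1]
    simpa using summable_geometric_of_lt_one (norm_nonneg q) hq
  refine Summable.of_norm_bounded
    ((hgeom.mul_of_nonneg hgeom (fun _ => by positivity) (fun _ => by positivity)).subtype A)
    fun ⟨⟨u, v⟩, hp⟩ => ?_
  obtain ⟨hu, hv⟩ := hA hp
  simp only [Set.mem_Ioi] at hu hv
  rw [comp_apply, norm_pow, ← pow_add]
  refine pow_le_pow_of_le_one (norm_nonneg q) hq.le ?_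
  obtain ⟨u, rfl⟩ := Nat.exists_eq_add_of_lt hu
  obtain ⟨v, rfl⟩ := Nat.exists_eq_add_of_lt hv
  simp only [zero_add, add_tsub_cancel_right]
  nlinarith

lemma mulPowSum_union (hq : ‖q‖ < 1) {A B : Set (ℕ × ℕ)} (hA : A ⊆ Set.Ioi 0 ×ˢ Set.Ioi 0)
    (hB : B ⊆ Set.Ioi 0 ×ˢ Set.Ioi 0) (hAB : Disjoint A B) :
    mulPowSum q (A ∪ B) = mulPowSum q A + mulPowSum q B :=
  Summable.tsum_union_disjoint (f := fun p : ℕ × ℕ => q ^ (p.1 * p.2)) hAB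
    (summable_mulPow hq hA) (summable_mulPow hq hB)

lemma mulPowSum_image {f : ℕ × ℕ → ℕ × ℕ} {A : Set (ℕ × ℕ)} (hf : Set.InjOn f A)
    (hmul : ∀ p, (f p).1 * (f p).2 = p.1 * p.2) : mulPowSum q (f '' A) = mulPowSum q A := by
  simp only [mulPowSum, tsum_image (fun p : ℕ × ℕ => q ^ (p.1 * p.2)) hf, hmul]

lemma hasSum_mulPowSum_range (hq : ‖q‖ < 1) {ι : Type*} {g : ι → ℕ × ℕ} (hg : Injective g)
    (hpos : ∀ i, 0 < (g i).1 ∧ 0 < (g i).2) :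
    HasSum (fun i => q ^ ((g i).1 * (g i).2)) (mulPowSum q (Set.range g)) := by
  have hs : Summable (fun i => q ^ ((g i).1 * (g i).2)) :=
    (Equiv.ofInjective g hg).summable_iff.2
      (summable_mulPow hq (by rintro _ ⟨i, rfl⟩; exact hpos i))
  rw [mulPowSum, tsum_range (fun p : ℕ × ℕ => q ^ (p.1 * p.2)) hg]
  exact hs.hasSum

lemma hasSum_mulPowSum_fiberwise (hq : ‖q‖ < 1) {A : Set (ℕ × ℕ)}
    (hA : A ⊆ Set.Ioi 0 ×ˢ Set.Ioi 0) (F : ℕ → Finset ℕ) (hF : ∀ u v, (u + 1, v) ∈ A ↔ v ∈ F u) :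
    HasSum (fun u => ∑ v ∈ F u, q ^ ((u + 1) * v)) (mulPowSum q A) := by
  let w : ℕ × ℕ → ℂ := fun p => q ^ (p.1 * p.2)
  let shift : ℕ × ℕ → ℕ × ℕ := fun p => (p.1 + 1, p.2)
  have hshift : Injective shift := fun p p' h => by
    simp only [shift, Prod.mk.injEq, add_left_inj] at h
    exact Prod.ext h.1 h.2
  have hsum : HasSum (A.indicator w ∘ shift) (mulPowSum q A) := by
    refine (hshift.hasSum_iff fun p hp => Set.indicator_of_notMem (fun hpA => hp ?_) _).2
      (hasSum_subtype_iff_indicator.1 (summable_mulPow hq hA).hasSum)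
    exact ⟨(p.1 - 1, p.2), Prod.ext (Nat.sub_add_cancel (hA hpA).1) rfl⟩
  refine hsum.prod_fiberwise fun u => ?_
  have hfib : ∀ v, (A.indicator w ∘ shift) (u, v) = if v ∈ F u then q ^ ((u + 1) * v) else 0 :=
    fun v => by
      by_cases hv : v ∈ F u
      · simp [shift, w, hv, (hF u v).2 hv]
      · simp [shift, w, hv, mt (hF u v).1 hv]
  have h : HasSum _ _ := hasSum_sum_of_ne_finset_zero (s := F u)
    (f := fun v => (A.indicator w ∘ shift) (u, v)) fun v hv => (hfib v).trans (if_neg hv)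
  rwa [Finset.sum_congr rfl fun v hv => (hfib v).trans (if_pos hv)] at h

def oddLt : Set (ℕ × ℕ) := {p | Odd p.1 ∧ p.1 < 2 * p.2}

def oddGt : Set (ℕ × ℕ) := {p | Odd p.1 ∧ 0 < p.2 ∧ 2 * p.2 < p.1}

def oddPartGt : Set (ℕ × ℕ) :=
  {p | Odd p.1 ∧ 2 ^ (p.2.factorization 2 + 1) * p.1 < ordCompl[2] p.2}

def oddSwap (p : ℕ × ℕ) : ℕ × ℕ := (ordCompl[2] p.2, 2 ^ p.2.factorization 2 * p.1)

def collectTwos (p : ℕ × ℕ) : ℕ × ℕ :=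
  (ordCompl[2] p.1, 2 ^ (p.1.factorization 2 + p.2.factorization 2) * ordCompl[2] p.2)

lemma oddLt_subset : oddLt ⊆ Set.Ioi 0 ×ˢ Set.Ioi 0 := by
  rintro ⟨d, e⟩ ⟨hd, h⟩
  exact ⟨hd.pos, show 0 < e by omega⟩

lemma mem_oddPartGt_two_pow_mul (s : ℕ) {d t : ℕ} (ht : Odd t) :
    (d, 2 ^ s * t) ∈ oddPartGt ↔ Odd d ∧ 2 ^ (s + 1) * d < t := by
  rw [oddPartGt, Set.mem_ofPred_eq, ordCompl_two_pow_mul_odd s ht,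
    factorization_two_pow_mul_odd s ht]

lemma oddPartGt_subset_oddLt : oddPartGt ⊆ oddLt := by
  rintro ⟨d, e⟩ ⟨hd, h⟩
  have hd' : d ≤ 2 ^ (e.factorization 2 + 1) * d := Nat.le_mul_of_pos_left d (by positivity)
  have he : ordCompl[2] e ≤ e := Nat.ordCompl_le e 2
  exact ⟨hd, by simp only at h hd' he ⊢; omega⟩

lemma oddSwap_two_pow_mul (s d : ℕ) {t : ℕ} (ht : Odd t) :
    oddSwap (d, 2 ^ s * t) = (t, 2 ^ s * d) := by
  rw [oddSwap, ordCompl_two_pow_mul_odd s ht, factorization_two_pow_mul_odd s ht]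

lemma oddSwap_mul (p : ℕ × ℕ) : (oddSwap p).1 * (oddSwap p).2 = p.1 * p.2 := by
  conv_rhs => rw [← Nat.ordProj_mul_ordCompl_eq_self p.2 2]
  simp only [oddSwap]
  ring

lemma oddSwap_oddSwap {p : ℕ × ℕ} (h₁ : Odd p.1) (h₂ : p.2 ≠ 0) : oddSwap (oddSwap p) = p := by
  obtain ⟨d, e⟩ := p
  obtain ⟨s, t, ht, rfl⟩ := Nat.exists_eq_two_pow_mul_odd h₂
  rw [oddSwap_two_pow_mul s d ht, oddSwap_two_pow_mul s t h₁]

lemma bijOn_oddSwap : Set.BijOn oddSwap oddPartGt oddGt := by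
  have hne : ∀ p ∈ oddPartGt, p.2 ≠ 0 := by
    rintro ⟨d, e⟩ ⟨-, h⟩ rfl
    simp at h
  refine Set.InvOn.bijOn ⟨fun p hp => oddSwap_oddSwap hp.1 (hne p hp),
    fun p hp => oddSwap_oddSwap hp.1 hp.2.1.ne'⟩ ?_ ?_
  · rintro ⟨d, e⟩ hp
    obtain ⟨s, t, ht, rfl⟩ := Nat.exists_eq_two_pow_mul_odd (hne _ hp)
    obtain ⟨hd, h⟩ := (mem_oddPartGt_two_pow_mul s ht).1 hp
    rw [oddSwap_two_pow_mul s d ht]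
    exact ⟨ht, by have := hd.pos; positivity, by rw [pow_succ] at h; linarith⟩
  · rintro ⟨d, e⟩ ⟨hd, he, h⟩
    obtain ⟨s, t, ht, rfl⟩ := Nat.exists_eq_two_pow_mul_odd he.ne'
    rw [oddSwap_two_pow_mul s d ht, mem_oddPartGt_two_pow_mul s hd, pow_succ]
    exact ⟨ht, by linarith⟩

lemma collectTwos_two_pow_mul (a b : ℕ) {d t : ℕ} (hd : Odd d) (ht : Odd t) :
    collectTwos (2 ^ a * d, 2 ^ b * t) = (d, 2 ^ (a + b) * t) := by
  rw [collectTwos, ordCompl_two_pow_mul_odd a hd, ordCompl_two_pow_mul_odd b ht,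
    factorization_two_pow_mul_odd a hd, factorization_two_pow_mul_odd b ht]

lemma collectTwos_mul (p : ℕ × ℕ) : (collectTwos p).1 * (collectTwos p).2 = p.1 * p.2 := by
  conv_rhs =>
    rw [← Nat.ordProj_mul_ordCompl_eq_self p.1 2, ← Nat.ordProj_mul_ordCompl_eq_self p.2 2]
  simp only [collectTwos]
  ring

lemma injOn_collectTwos : Set.InjOn collectTwos balanced := by
  rintro ⟨u, v⟩ huv ⟨u', v'⟩ huv' h
  obtain ⟨a, d, hd, rfl⟩ := Nat.exists_eq_two_pow_mul_odd (ne_zero_of_mem_balanced huv).1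
  obtain ⟨b, t, ht, rfl⟩ := Nat.exists_eq_two_pow_mul_odd (ne_zero_of_mem_balanced huv).2
  obtain ⟨a', d', hd', rfl⟩ := Nat.exists_eq_two_pow_mul_odd (ne_zero_of_mem_balanced huv').1
  obtain ⟨b', t', ht', rfl⟩ := Nat.exists_eq_two_pow_mul_odd (ne_zero_of_mem_balanced huv').2
  rw [collectTwos_two_pow_mul a b hd ht, collectTwos_two_pow_mul a' b' hd' ht', Prod.mk.injEq]
    at h
  obtain ⟨rfl, h⟩ := h
  obtain ⟨hs, rfl⟩ := two_pow_mul_odd_inj ht ht' h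
  obtain rfl := eq_of_two_pow_mul_mem_balanced hd.pos huv huv' hs
  obtain rfl : b = b' := by omega
  rfl

lemma mapsTo_collectTwos : Set.MapsTo collectTwos balanced (oddLt \ oddPartGt) := by
  rintro ⟨u, v⟩ huv
  obtain ⟨a, d, hd, rfl⟩ := Nat.exists_eq_two_pow_mul_odd (ne_zero_of_mem_balanced huv).1
  obtain ⟨b, t, ht, rfl⟩ := Nat.exists_eq_two_pow_mul_odd (ne_zero_of_mem_balanced huv).2
  obtain ⟨h₁, h₂⟩ := huv
  rw [collectTwos_two_pow_mul a b hd ht]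
  refine ⟨⟨hd, ?_⟩, fun h => ?_⟩
  · calc d ≤ 2 ^ a * d := Nat.le_mul_of_pos_left d (by positivity)
      _ < 2 * (2 ^ b * t) := h₁
      _ ≤ 2 * (2 ^ (a + b) * t) := by gcongr <;> omega
  · rw [mem_oddPartGt_two_pow_mul _ ht] at h
    have : t ≤ 2 ^ (a + b + 1) * d :=
      calc t ≤ 2 ^ b * t := Nat.le_mul_of_pos_left t (by positivity)
        _ ≤ 2 * (2 ^ a * d) := h₂
        _ = 2 ^ (a + 1) * d := by ring
        _ ≤ 2 ^ (a + b + 1) * d := by gcongr <;> omega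
    omega

lemma surjOn_collectTwos : Set.SurjOn collectTwos balanced (oddLt \ oddPartGt) := by
  rintro ⟨d, e⟩ ⟨⟨hd, hde⟩, hC⟩
  obtain ⟨s, t, ht, rfl⟩ := Nat.exists_eq_two_pow_mul_odd (show e ≠ 0 by omega)
  rw [mem_oddPartGt_two_pow_mul s ht, not_and, not_lt] at hC
  obtain ⟨a, b, rfl, hab⟩ :=
    exists_two_pow_mul_mem_balanced d t s (by rw [pow_succ]; linarith) (hC hd)
  exact ⟨(2 ^ a * d, 2 ^ b * t), hab, collectTwos_two_pow_mul a b hd ht⟩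

lemma mulPowSum_oddLt (hq : ‖q‖ < 1) :
    mulPowSum q oddLt = mulPowSum q oddGt + mulPowSum q balanced := by
  have hC : mulPowSum q oddPartGt = mulPowSum q oddGt := by
    rw [← bijOn_oddSwap.image_eq, mulPowSum_image bijOn_oddSwap.injOn oddSwap_mul]
  have hY : mulPowSum q (oddLt \ oddPartGt) = mulPowSum q balanced := by
    rw [← (Set.BijOn.mk mapsTo_collectTwos injOn_collectTwos surjOn_collectTwos).image_eq,
      mulPowSum_image injOn_collectTwos collectTwos_mul]
  rw [← Set.union_sdiff_cancel oddPartGt_subset_oddLt,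
    mulPowSum_union hq (oddPartGt_subset_oddLt.trans oddLt_subset)
      (Set.sdiff_subset.trans oddLt_subset) Set.disjoint_sdiff_right, hC, hY]

lemma oddLt_eq_range : oddLt = Set.range fun p : ℕ × ℕ => (2 * p.1 + 1, p.1 + 1 + p.2) := by
  ext ⟨d, e⟩
  constructor
  · rintro ⟨⟨k, rfl⟩, h⟩
    exact ⟨(k, e - k - 1), Prod.ext rfl (by dsimp only at h ⊢; omega)⟩
  · rintro ⟨⟨k, m⟩, h⟩
    simp only [Prod.mk.injEq] at h
    obtain ⟨rfl, rfl⟩ := h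
    exact ⟨⟨k, rfl⟩, by omega⟩

lemma oddGt_eq_range : oddGt = Set.range fun p : ℕ × ℕ => (2 * (p.1 + p.2) + 3, p.1 + 1) := by
  ext ⟨d, e⟩
  constructor
  · rintro ⟨⟨c, rfl⟩, he, h⟩
    exact ⟨(e - 1, c - e), Prod.ext (by dsimp only at h ⊢; omega) (by dsimp only at he ⊢; omega)⟩
  · rintro ⟨⟨k, m⟩, h⟩
    simp only [Prod.mk.injEq] at h
    obtain ⟨rfl, rfl⟩ := h
    exact ⟨⟨k + m + 1, by ring⟩, by omega, by omega⟩

lemma hasSum_pow_add_mul (hq : ‖q‖ < 1) (a : ℕ) {b : ℕ} (hb : b ≠ 0) :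
    HasSum (fun m => q ^ (a + b * m)) (q ^ a / (1 - q ^ b)) := by
  have hqb : ‖q ^ b‖ < 1 := by
    rw [norm_pow]
    exact pow_lt_one₀ (norm_nonneg q) hq hb
  simpa [pow_add, pow_mul, div_eq_mul_inv] using
    (hasSum_geometric_of_norm_lt_one hqb).mul_left (q ^ a)

lemma hasSum_mulPowSum_oddLt (hq : ‖q‖ < 1) :
    HasSum (fun k : ℕ => q ^ ((2 * k + 1) * (k + 1)) / (1 - q ^ (2 * k + 1)))
      (mulPowSum q oddLt) := by
  rw [oddLt_eq_range]
  refine (hasSum_mulPowSum_range hq (fun p p' h => ?_) fun p => ⟨by omega, by omega⟩)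
    |>.prod_fiberwise fun k => ?_
  · simp only [Prod.mk.injEq] at h
    exact Prod.ext (by omega) (by omega)
  · exact (hasSum_pow_add_mul hq _ (by omega)).congr_fun fun m => by ring

lemma hasSum_mulPowSum_oddGt (hq : ‖q‖ < 1) :
    HasSum (fun k : ℕ => q ^ ((k + 1) * (2 * k + 3)) / (1 - q ^ (2 * k + 2)))
      (mulPowSum q oddGt) := by
  rw [oddGt_eq_range]
  refine (hasSum_mulPowSum_range hq (fun p p' h => ?_) fun p => ⟨by omega, by omega⟩)
    |>.prod_fiberwise fun k => ?_
  · simp only [Prod.mk.injEq] at h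
    exact Prod.ext (by omega) (by omega)
  · exact (hasSum_pow_add_mul hq _ (by omega)).congr_fun fun m => by ring

lemma hasSum_lhs (hq : ‖q‖ < 1) :
    HasSum (fun n : ℕ => (-1 : ℂ) ^ n * q ^ ((n + 1) * (n + 2) / 2) / (1 - q ^ (n + 1)))
      (mulPowSum q oddLt - mulPowSum q oddGt) := by
  rw [sub_eq_add_neg]
  refine HasSum.even_add_odd ?_ ?_
  · refine (hasSum_mulPowSum_oddLt hq).congr_fun fun k => ?_
    rw [pow_mul, neg_one_sq, one_pow, one_mul, Nat.div_eq_of_eq_mul_left two_pos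
      (by ring : (2 * k + 1) * (2 * k + 1 + 1) = (2 * k + 1) * (k + 1) * 2)]
  · refine (hasSum_mulPowSum_oddGt hq).neg.congr_fun fun k => ?_
    rw [pow_succ, pow_mul, neg_one_sq, one_pow, one_mul, neg_one_mul, neg_div,
      Nat.div_eq_of_eq_mul_left two_pos
        (by ring : (2 * k + 1 + 1) * (2 * k + 1 + 2) = (k + 1) * (2 * k + 3) * 2)]

def lowerWedge : Set (ℕ × ℕ) := {p | 0 < p.1 ∧ p.1 ≤ p.2 ∧ p.2 ≤ 2 * p.1}

def innerWedge : Set (ℕ × ℕ) := {p | p.1 < p.2 ∧ p.2 < 2 * p.1}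

lemma balanced_eq_union : balanced = lowerWedge ∪ Prod.swap '' innerWedge := by
  rw [Set.image_swap_eq_preimage_swap]
  ext ⟨u, v⟩
  simp only [balanced, lowerWedge, innerWedge, Set.mem_union, Set.mem_preimage, Prod.swap_prod_mk,
    Set.mem_ofPred_eq]
  omega

lemma sum_Icc_add_sum_Ioo_pow {R : Type*} [CommSemiring R] (r : R) (j : ℕ) :
    ∑ v ∈ Icc (j + 1) (2 * (j + 1)), r ^ v + ∑ v ∈ Ioo (j + 1) (2 * (j + 1)), r ^ v =
      r ^ (j + 1) * (1 + r ^ (j + 1) + 2 * ∑ i ∈ Icc 1 j, r ^ i) := by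
  have hIoo : ∑ v ∈ Ioo (j + 1) (2 * (j + 1)), r ^ v = r ^ (j + 1) * ∑ i ∈ Icc 1 j, r ^ i := by
    have : Ioo (j + 1) (2 * (j + 1)) = (Icc 1 j).map (addLeftEmbedding (j + 1)) := by
      rw [map_add_left_Icc]
      ext v
      simp only [mem_Ioo, mem_Icc]
      omega
    rw [this, sum_map, mul_sum]
    simp only [addLeftEmbedding_apply, pow_add]
  rw [Icc_eq_cons_Ico (by omega), sum_cons, Ico_eq_cons_Ioo (by omega), sum_cons, hIoo]
  ring

lemma hasSum_rhs (hq : ‖q‖ < 1) :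
    HasSum (fun j : ℕ => q ^ ((j + 1) ^ 2) *
        (1 + q ^ ((j + 1) ^ 2) + 2 * ∑ i ∈ Icc 1 j, q ^ (i * (j + 1))))
      (mulPowSum q balanced) := by
  have hL : lowerWedge ⊆ Set.Ioi 0 ×ˢ Set.Ioi 0 := by
    rintro ⟨u, v⟩ ⟨h₁, h₂, -⟩
    exact ⟨h₁, show 0 < v by omega⟩
  have hM : innerWedge ⊆ Set.Ioi 0 ×ˢ Set.Ioi 0 := by
    rintro ⟨u, v⟩ ⟨h₁, h₂⟩
    exact ⟨show 0 < u by omega, show 0 < v by omega⟩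
  have hM' : Prod.swap '' innerWedge ⊆ Set.Ioi 0 ×ˢ Set.Ioi 0 := by
    rintro _ ⟨p, hp, rfl⟩
    exact ⟨(hM hp).2, (hM hp).1⟩
  have hdisj : Disjoint lowerWedge (Prod.swap '' innerWedge) := by
    rw [Set.disjoint_left]
    rintro ⟨u, v⟩ ⟨-, h, -⟩ ⟨⟨u', v'⟩, ⟨h', -⟩, hp⟩
    simp only [Prod.swap_prod_mk, Prod.mk.injEq] at hp
    omega
  rw [balanced_eq_union, mulPowSum_union hq hL hM' hdisj,
    mulPowSum_image Prod.swap_injective.injOn fun p => mul_comm _ _]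
  convert (hasSum_mulPowSum_fiberwise hq hL (fun u => Icc (u + 1) (2 * (u + 1)))
    fun u v => ?_).add (hasSum_mulPowSum_fiberwise hq hM (fun u => Ioo (u + 1) (2 * (u + 1)))
    fun u v => ?_) using 1
  · funext j
    have h : ∀ i, q ^ (i * (j + 1)) = (q ^ (j + 1)) ^ i := fun i => by rw [← pow_mul, mul_comm]
    simp only [sq, h, pow_mul, sum_Icc_add_sum_Ioo_pow]
  · simp only [lowerWedge, Set.mem_ofPred_eq, mem_Icc]
    omega
  · simp only [innerWedge, Set.mem_ofPred_eq, mem_Ioo]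

end

end HSeriesIdentity

open HSeriesIdentity in
/-- For `‖q‖ < 1`,
`h(q) = ∑_{n≥1} (-1)^{n+1} q^{n(n+1)/2}/(1-q^n)`
equals `∑_{j≥1} q^{j^2} (1 + 2q^j + 2q^{2j} + ⋯ + 2q^{j^2-j} + q^{j^2})`.
(Indices shifted: `n = n+1`, `j = j+1`.) -/
theorem stmt0 (q : ℂ) (hq : ‖q‖ < 1) :
    ∑' n : ℕ, (-1 : ℂ) ^ n * q ^ ((n + 1) * (n + 2) / 2) / (1 - q ^ (n + 1)) =
      ∑' j : ℕ, q ^ ((j + 1) ^ 2) *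
        (1 + q ^ ((j + 1) ^ 2) + 2 * ∑ i ∈ Finset.Icc 1 j, q ^ (i * (j + 1))) := by
  rw [(hasSum_lhs hq).tsum_eq, (hasSum_rhs hq).tsum_eq, mulPowSum_oddLt hq]
  ring
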